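/- Let 0<q<1 and 0≤β≤1/q. Then, as x↓0 through positive real values, ₂φ₁(iq√β x, −iq√β x; −x²q; q, 1/z) → 1/(1/z;q)_∞ and ₂φ₁(iq√β/x, −iq√β/x; −q/x²; q, 1/z) → (−βq/z;q)_∞, and in both cases the convergence is uniform for z in compact subsets of {z∈ℂ : |z|>1}. -/

import Mathlib

open scoped BigOperators Topology

noncomputable section

/-- finite q-Pochhammer symbol `(a;q)_n` (complex). -/
def qPoch (a q : ℂ) (n : ℕ) : ℂ := ∏ j ∈ Finset.range n, (1 - a * q ^ j)

/-- infinite q-Pochhammer symbol `(a;q)_∞` (complex). -/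
def qPochInf (a q : ℂ) : ℂ := ∏' j : ℕ, (1 - a * q ^ j)

/-- basic hypergeometric series `₂φ₁(a,b;c;q,z)`. -/
def phi21 (a b c q z : ℂ) : ℂ :=
  ∑' n : ℕ, (qPoch a q n * qPoch b q n) / (qPoch c q n * qPoch q q n) * z ^ n

open Filter Finset

/-!
The `n`-th coefficient of `₂φ₁(a, -a; c; q, w)` is `∏_{j<n} (1 - a²q^{2j}) / (1 - c q^j)` divided
by `(q;q)_n`. For both families every factor has the form `(1 + β p² u) / (1 + p u)` with
`p = q^{j+1}` and `u = x²` resp. `u = x⁻²`; since `β q ≤ 1` it lies in `[0, 1]`, and it tends to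
`1` as `u → 0` and to `β p` as `u → ∞`. So the coefficients are dominated by `1 / ‖(q;q)_n‖`, which
is summable against `rⁿ` for `r < 1`, and they converge to `1 / (q;q)_n` resp.
`(β q)ⁿ q^{n(n-1)/2} / (q;q)_n`. Tannery's theorem then gives convergence of the series, uniformly
for `‖w‖ ≤ r`, and the limits are identified by Euler's identities `∑ wⁿ / (q;q)_n = 1 / (w;q)_∞`
and `∑ q^{n(n-1)/2} wⁿ / (q;q)_n = (-w;q)_∞`. These follow by iterating the functional equations
`E(w) (1 - w) = E(q w)` and `F(w) = (1 + w) F(q w)` and letting `E(q^N w), F(q^N w) → 1`.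
-/

section QPochhammer

variable {a q : ℂ}

lemma qPoch_zero (a q : ℂ) : qPoch a q 0 = 1 := prod_range_zero _

lemma qPoch_succ (a q : ℂ) (n : ℕ) : qPoch a q (n + 1) = qPoch a q n * (1 - a * q ^ n) :=
  prod_range_succ _ _

lemma qPoch_ne_zero (ha : ‖a‖ < 1) (hq : ‖q‖ ≤ 1) (n : ℕ) : qPoch a q n ≠ 0 := by
  refine prod_ne_zero_iff.mpr fun j _ => sub_ne_zero.mpr fun h => ?_
  have : ‖a * q ^ j‖ < 1 := by
    rw [norm_mul, norm_pow]
    exact mul_lt_one_of_nonneg_of_lt_one_left (norm_nonneg a) ha (pow_le_one₀ (norm_nonneg q) hq)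
  rw [← h, norm_one] at this
  exact this.false

lemma tendsto_qPoch (hq : ‖q‖ < 1) (a : ℂ) :
    Tendsto (qPoch a q) atTop (𝓝 (qPochInf a q)) := by
  have hs : Summable fun j : ℕ => ‖-(a * q ^ j)‖ := by
    simpa [norm_mul, norm_pow] using (summable_geometric_of_lt_one (norm_nonneg q) hq).mul_left ‖a‖
  have := (multipliable_one_add_of_summable hs).hasProd.tendsto_prod_nat
  simp only [← sub_eq_add_neg] at this
  exact this

lemma summable_pow_div_norm_qPoch (hq : ‖q‖ < 1) {ρ : ℝ} (hρ0 : 0 ≤ ρ) (hρ1 : ρ < 1) :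
    Summable fun n => ρ ^ n / ‖qPoch q q n‖ := by
  obtain ⟨r, hρr, hr1⟩ := exists_between hρ1
  refine summable_of_ratio_norm_eventually_le hr1 ?_
  have hratio : Tendsto (fun n : ℕ => ρ / ‖1 - q * q ^ n‖) atTop (𝓝 ρ) := by
    have h1 : Tendsto (fun n : ℕ => ‖1 - q * q ^ n‖) atTop (𝓝 1) := by
      simpa using (((tendsto_pow_atTop_nhds_zero_of_norm_lt_one hq).const_mul q).const_sub 1).norm
    have := (tendsto_const_nhds (x := ρ)).div h1 one_ne_zero
    rwa [div_one] at this
  filter_upwards [hratio.eventually (ge_mem_nhds hρr)] with n hn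
  rw [Real.norm_of_nonneg (by positivity), Real.norm_of_nonneg (by positivity), qPoch_succ,
    norm_mul, pow_succ]
  calc ρ ^ n * ρ / (‖qPoch q q n‖ * ‖1 - q * q ^ n‖)
      = ρ / ‖1 - q * q ^ n‖ * (ρ ^ n / ‖qPoch q q n‖) := by ring
    _ ≤ r * (ρ ^ n / ‖qPoch q q n‖) := by gcongr

end QPochhammer

section Euler

variable {q w : ℂ} {c : ℕ → ℂ}

lemma norm_pow_mul_lt_one (hq : ‖q‖ ≤ 1) (hw : ‖w‖ < 1) (N : ℕ) : ‖q ^ N * w‖ < 1 := by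
  rw [norm_mul, norm_pow]
  exact mul_lt_one_of_nonneg_of_lt_one_right (pow_le_one₀ (norm_nonneg q) hq) (norm_nonneg w) hw

lemma summable_mul_pow_div_qPoch (hc : ∀ n, ‖c n‖ ≤ 1) (hq : ‖q‖ < 1) (hw : ‖w‖ < 1) :
    Summable fun n => c n * w ^ n / qPoch q q n := by
  refine (summable_pow_div_norm_qPoch hq (norm_nonneg w) hw).of_norm_bounded fun n => ?_
  rw [norm_div, norm_mul, norm_pow]
  gcongr
  exact mul_le_of_le_one_left (by positivity) (hc n)

lemma tendsto_tsum_mul_pow_div_qPoch (hc : ∀ n, ‖c n‖ ≤ 1) (hq : ‖q‖ < 1) (hw : ‖w‖ < 1) :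
    Tendsto (fun N : ℕ => ∑' n, c n * (q ^ N * w) ^ n / qPoch q q n) atTop (𝓝 (c 0)) := by
  have hlim : ∀ n, Tendsto (fun N : ℕ => c n * (q ^ N * w) ^ n / qPoch q q n) atTop
      (𝓝 (c n * 0 ^ n / qPoch q q n)) := fun n => by
    have := (tendsto_pow_atTop_nhds_zero_of_norm_lt_one hq).mul_const w
    rw [zero_mul] at this
    exact ((this.pow n).const_mul (c n)).div_const _
  have hbound : ∀ N n, ‖c n * (q ^ N * w) ^ n / qPoch q q n‖ ≤ ‖w‖ ^ n / ‖qPoch q q n‖ := by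
    intro N n
    rw [norm_div, norm_mul, norm_pow, norm_mul, norm_pow]
    gcongr
    calc ‖c n‖ * (‖q‖ ^ N * ‖w‖) ^ n ≤ 1 * (1 * ‖w‖) ^ n := by
          gcongr
          exacts [hc n, pow_le_one₀ (norm_nonneg q) hq.le]
      _ = ‖w‖ ^ n := by ring
  have := tendsto_tsum_of_dominated_convergence (summable_pow_div_norm_qPoch hq (norm_nonneg w) hw)
    hlim (.of_forall hbound)
  rwa [tsum_eq_single 0 fun n hn => by simp [zero_pow hn], pow_zero, mul_one, qPoch_zero,
    div_one] at this

lemma tsum_mul_pow_div_qPoch_sub (hc : ∀ n, ‖c n‖ ≤ 1) (hq : ‖q‖ < 1) (hw : ‖w‖ < 1) :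
    ∑' n, c n * w ^ n / qPoch q q n - ∑' n, c n * (q * w) ^ n / qPoch q q n =
      w * ∑' n, c (n + 1) * w ^ n / qPoch q q n := by
  have hqw : ‖q * w‖ < 1 := by simpa using norm_pow_mul_lt_one hq.le hw 1
  have hs := (summable_mul_pow_div_qPoch hc hq hw).sub (summable_mul_pow_div_qPoch hc hq hqw)
  rw [← (summable_mul_pow_div_qPoch hc hq hw).tsum_sub (summable_mul_pow_div_qPoch hc hq hqw),
    hs.tsum_eq_zero_add, ← tsum_mul_left]
  simp only [pow_zero, mul_one, sub_self, zero_add]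
  congr 1 with n
  have hP := qPoch_ne_zero hq hq.le n
  have hP' := qPoch_ne_zero hq hq.le (n + 1)
  rw [qPoch_succ] at hP' ⊢
  have h1 : 1 - q * q ^ n ≠ 0 := right_ne_zero_of_mul hP'
  field_simp
  ring

theorem hasSum_pow_div_qPoch (hq : ‖q‖ < 1) (hw : ‖w‖ < 1) :
    HasSum (fun n => w ^ n / qPoch q q n) (qPochInf w q)⁻¹ := by
  set E : ℂ → ℂ := fun w => ∑' n, w ^ n / qPoch q q n with hE
  have hc : ∀ n : ℕ, ‖(1 : ℂ)‖ ≤ 1 := fun _ => norm_one.le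
  have hstep : ∀ w : ℂ, ‖w‖ < 1 → E w * (1 - w) = E (q * w) := fun w hw => by
    have := tsum_mul_pow_div_qPoch_sub hc hq hw
    simp only [one_mul] at this
    simp only [hE]
    linear_combination this
  have hiter : ∀ N, E w * qPoch w q N = E (q ^ N * w) := by
    intro N
    induction N with
    | zero => simp [qPoch_zero]
    | succ N ih =>
      rw [qPoch_succ, ← mul_assoc, ih, pow_succ', mul_assoc,
        ← hstep _ (norm_pow_mul_lt_one hq.le hw N)]
      ring_nf
  have hprod : E w * qPochInf w q = 1 :=
    tendsto_nhds_unique ((tendsto_qPoch hq w).const_mul (E w))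
      (by simp only [hiter]; simpa only [one_mul] using tendsto_tsum_mul_pow_div_qPoch hc hq hw)
  rw [← eq_inv_of_mul_eq_one_left hprod]
  simpa only [one_mul] using (summable_mul_pow_div_qPoch hc hq hw).hasSum

theorem hasSum_qPochInf_neg (hq : ‖q‖ < 1) (hw : ‖w‖ < 1) :
    HasSum (fun n => q ^ n.choose 2 * w ^ n / qPoch q q n) (qPochInf (-w) q) := by
  set F : ℂ → ℂ := fun w => ∑' n, q ^ n.choose 2 * w ^ n / qPoch q q n with hF
  have hc : ∀ n : ℕ, ‖q ^ n.choose 2‖ ≤ 1 := fun n => by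
    rw [norm_pow]; exact pow_le_one₀ (norm_nonneg q) hq.le
  have hshift : ∀ (w : ℂ) (n : ℕ), q ^ (n + 1).choose 2 * w ^ n = q ^ n.choose 2 * (q * w) ^ n :=
      fun w n => by
    rw [Nat.choose_succ_succ', Nat.choose_one_right, pow_add, mul_pow]
    ring
  have hstep : ∀ w : ℂ, ‖w‖ < 1 → F w = (1 + w) * F (q * w) := fun w hw => by
    have := tsum_mul_pow_div_qPoch_sub hc hq hw
    simp only [hshift] at this
    simp only [hF]
    linear_combination this
  have hiter : ∀ N, F w = qPoch (-w) q N * F (q ^ N * w) := by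
    intro N
    induction N with
    | zero => simp [qPoch_zero]
    | succ N ih =>
      rw [ih, hstep _ (norm_pow_mul_lt_one hq.le hw N), qPoch_succ, pow_succ', mul_assoc q]
      ring
  have hlim : Tendsto (fun N => qPoch (-w) q N * F (q ^ N * w)) atTop (𝓝 (qPochInf (-w) q)) := by
    simpa using (tendsto_qPoch hq (-w)).mul (tendsto_tsum_mul_pow_div_qPoch hc hq hw)
  have hFw : F w = qPochInf (-w) q :=
    tendsto_nhds_unique tendsto_const_nhds (by simpa only [← hiter] using hlim)
  rw [← hFw]
  exact (summable_mul_pow_div_qPoch hc hq hw).hasSum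

end Euler

section UniformConvergence

variable {𝕜 : Type*} [NormedField 𝕜]

theorem tendstoUniformlyOn_tsum_mul_pow [CompleteSpace 𝕜] {α : Type*} {l : Filter α} [l.NeBot]
    {A : α → ℕ → 𝕜} {c : ℕ → 𝕜} {b : ℕ → ℝ} {r : ℝ} (hr : 0 ≤ r)
    (hb : Summable fun n => b n * r ^ n)
    (hA : ∀ᶠ x in l, ∀ n, ‖A x n‖ ≤ b n) (hAc : ∀ n, Tendsto (A · n) l (𝓝 (c n))) :
    TendstoUniformlyOn (fun x w => ∑' n, A x n * w ^ n) (fun w => ∑' n, c n * w ^ n) l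
      (Metric.closedBall 0 r) := by
  have hcb : ∀ n, ‖c n‖ ≤ b n := fun n => le_of_tendsto (hAc n).norm (hA.mono fun x hx => hx n)
  have hdiff : ∀ᶠ x in l, ∀ n, ‖‖A x n - c n‖ * r ^ n‖ ≤ 2 * b n * r ^ n := by
    filter_upwards [hA] with x hx n
    rw [Real.norm_of_nonneg (by positivity)]
    gcongr
    linarith [norm_sub_le (A x n) (c n), hx n, hcb n]
  -- an error bound that is uniform in `‖w‖ ≤ r`
  have herr : Tendsto (fun x => ∑' n, ‖A x n - c n‖ * r ^ n) l (𝓝 0) := by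
    have hlim : ∀ n, Tendsto (fun x => ‖A x n - c n‖ * r ^ n) l (𝓝 0) := fun n => by
      simpa using (((hAc n).sub_const (c n)).norm).mul_const (r ^ n)
    simpa using tendsto_tsum_of_dominated_convergence (hb.mul_left 2) hlim
      (by simpa only [mul_assoc] using hdiff)
  have hsum : ∀ {d : ℕ → 𝕜} {w : 𝕜}, ‖w‖ ≤ r → (∀ n, ‖d n‖ ≤ b n) →
      Summable fun n => d n * w ^ n := fun hw hd =>
    hb.of_norm_bounded fun n => by
      rw [norm_mul, norm_pow]
      exact mul_le_mul (hd n) (pow_le_pow_left₀ (norm_nonneg _) hw n) (by positivity)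
        ((norm_nonneg _).trans (hd n))
  rw [Metric.tendstoUniformlyOn_iff]
  intro ε hε
  filter_upwards [hA, hdiff, herr.eventually (gt_mem_nhds hε)] with x hx hxd hxε w hw
  rw [mem_closedBall_zero_iff] at hw
  have hs : Summable fun n => ‖A x n - c n‖ * r ^ n :=
    (hb.mul_left 2).of_norm_bounded fun n => by simpa only [mul_assoc] using hxd n
  calc dist (∑' n, c n * w ^ n) (∑' n, A x n * w ^ n)
      = ‖∑' n, (A x n - c n) * w ^ n‖ := by
        rw [dist_eq_norm', ← (hsum hw hx).tsum_sub (hsum hw hcb)]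
        simp only [sub_mul]
    _ ≤ ∑' n, ‖A x n - c n‖ * r ^ n := by
        refine tsum_of_norm_bounded hs.hasSum fun n => ?_
        rw [norm_mul, norm_pow]
        gcongr
    _ < ε := hxε

lemma IsCompact.exists_subset_preimage_one_div_closedBall {K : Set 𝕜} (hK : IsCompact K)
    (hK1 : K ⊆ {z | 1 < ‖z‖}) :
    ∃ r, 0 ≤ r ∧ r < 1 ∧ K ⊆ (fun z => 1 / z) ⁻¹' Metric.closedBall 0 r := by
  rcases K.eq_empty_or_nonempty with rfl | hne
  · exact ⟨0, le_rfl, one_pos, Set.empty_subset _⟩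
  obtain ⟨z₀, hz₀, hmin⟩ := hK.exists_isMinOn hne continuous_norm.continuousOn
  have hz₀1 : 1 < ‖z₀‖ := hK1 hz₀
  refine ⟨‖z₀‖⁻¹, by positivity, inv_lt_one_of_one_lt₀ hz₀1, fun z hz => ?_⟩
  rw [Set.mem_preimage, mem_closedBall_zero_iff, norm_div, norm_one, one_div]
  exact inv_anti₀ (by linarith) (hmin hz)

lemma norm_one_div_lt_one {z : 𝕜} (hz : 1 < ‖z‖) : ‖1 / z‖ < 1 := by
  rw [norm_div, norm_one]
  exact (div_lt_one (by linarith)).mpr hz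

end UniformConvergence

-- `phi21 a b c q z` is `∑' n, phi21Coeff a b c q n * z ^ n` by definition.
def phi21Coeff (a b c q : ℂ) (n : ℕ) : ℂ := qPoch a q n * qPoch b q n / (qPoch c q n * qPoch q q n)

lemma tendsto_one_add_mul_div_one_add_mul_atTop (A : ℝ) {B : ℝ} (hB : B ≠ 0) :
    Tendsto (fun u : ℝ => (1 + A * u) / (1 + B * u)) atTop (𝓝 (A / B)) := by
  have hinv : Tendsto (fun u : ℝ => (u⁻¹ + A) / (u⁻¹ + B)) atTop (𝓝 (A / B)) := by
    have := (tendsto_inv_atTop_zero.add_const A).div (tendsto_inv_atTop_zero.add_const B)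
      (by rwa [zero_add])
    rwa [zero_add, zero_add] at this
  refine hinv.congr' ((eventually_gt_atTop 0).mono fun u hu => ?_)
  field_simp

section Coefficients

variable {q β : ℝ}

lemma phi21Coeff_eq (hβ : 0 ≤ β) (v : ℝ) (n : ℕ) :
    phi21Coeff (Complex.I * q * (Real.sqrt β : ℂ) * v) (-(Complex.I * q * (Real.sqrt β : ℂ) * v))
        (-((v : ℂ) ^ 2 * q)) q n =
      ((∏ j ∈ range n, (1 + β * (q * q ^ j) ^ 2 * v ^ 2) / (1 + q * q ^ j * v ^ 2) : ℝ) : ℂ) /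
        qPoch q q n := by
  have hs : ((Real.sqrt β : ℝ) : ℂ) ^ 2 = β := by rw [← Complex.ofReal_pow, Real.sq_sqrt hβ]
  rw [phi21Coeff, ← div_div, qPoch, qPoch, qPoch, ← prod_mul_distrib, ← prod_div_distrib]
  push_cast
  congr 1
  refine prod_congr rfl fun j _ => ?_
  congr 1
  · linear_combination (-((q : ℂ) * q ^ j) ^ 2 * v ^ 2) * (Real.sqrt β : ℂ) ^ 2 * Complex.I_sq
      + ((q : ℂ) * q ^ j) ^ 2 * v ^ 2 * hs
  · ring

lemma norm_phi21Coeff_le (hq0 : 0 ≤ q) (hq1 : q ≤ 1) (hβ0 : 0 ≤ β) (hβq : β * q ≤ 1) (v : ℝ)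
    (n : ℕ) :
    ‖phi21Coeff (Complex.I * q * (Real.sqrt β : ℂ) * v) (-(Complex.I * q * (Real.sqrt β : ℂ) * v))
        (-((v : ℂ) ^ 2 * q)) q n‖ ≤ ‖qPoch q q n‖⁻¹ := by
  have hfac : ∀ j ∈ range n, 0 ≤ (1 + β * (q * q ^ j) ^ 2 * v ^ 2) / (1 + q * q ^ j * v ^ 2) ∧
      (1 + β * (q * q ^ j) ^ 2 * v ^ 2) / (1 + q * q ^ j * v ^ 2) ≤ 1 := fun j _ => by
    have hqj : q ^ j ≤ 1 := pow_le_one₀ hq0 hq1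
    refine ⟨by positivity, (div_le_one (by positivity)).mpr ?_⟩
    have : β * (q * q ^ j) ≤ 1 := by nlinarith [mul_le_mul_of_nonneg_left hqj (mul_nonneg hβ0 hq0)]
    nlinarith [mul_le_mul_of_nonneg_right this (by positivity : 0 ≤ q * q ^ j * v ^ 2)]
  rw [phi21Coeff_eq hβ0, norm_div, Complex.norm_real,
    Real.norm_of_nonneg (prod_nonneg fun j hj => (hfac j hj).1), div_eq_mul_inv]
  exact mul_le_of_le_one_left (by positivity) (prod_le_one (fun j hj => (hfac j hj).1)
    fun j hj => (hfac j hj).2)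

lemma tendsto_phi21Coeff_nhds_zero (hβ0 : 0 ≤ β) (n : ℕ) :
    Tendsto (fun v : ℝ => phi21Coeff (Complex.I * q * (Real.sqrt β : ℂ) * v)
        (-(Complex.I * q * (Real.sqrt β : ℂ) * v)) (-((v : ℂ) ^ 2 * q)) q n)
      (𝓝 0) (𝓝 (qPoch q q n)⁻¹) := by
  have hfac : ∀ j ∈ range n, Tendsto (fun v : ℝ =>
      (1 + β * (q * q ^ j) ^ 2 * v ^ 2) / (1 + q * q ^ j * v ^ 2)) (𝓝 0) (𝓝 1) := fun j _ => by
    have hcont : ContinuousAt (fun v : ℝ =>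
        (1 + β * (q * q ^ j) ^ 2 * v ^ 2) / (1 + q * q ^ j * v ^ 2)) 0 := by
      fun_prop (disch := simp)
    convert hcont.tendsto using 2
    simp
  have := ((Complex.continuous_ofReal.tendsto _).comp (tendsto_finsetProd _ hfac)).div_const
    (qPoch q q n)
  rw [prod_const_one, Complex.ofReal_one, one_div] at this
  simp only [phi21Coeff_eq hβ0]
  exact this

lemma tendsto_phi21Coeff_atTop (hq0 : q ≠ 0) (hβ0 : 0 ≤ β) (n : ℕ) :
    Tendsto (fun v : ℝ => phi21Coeff (Complex.I * q * (Real.sqrt β : ℂ) * v)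
        (-(Complex.I * q * (Real.sqrt β : ℂ) * v)) (-((v : ℂ) ^ 2 * q)) q n)
      atTop (𝓝 ((β * q) ^ n * q ^ n.choose 2 / qPoch q q n)) := by
  have hfac : ∀ j ∈ range n, Tendsto (fun v : ℝ =>
      (1 + β * (q * q ^ j) ^ 2 * v ^ 2) / (1 + q * q ^ j * v ^ 2)) atTop
      (𝓝 (β * q * q ^ j)) := fun j _ => by
    have hp : q * q ^ j ≠ 0 := mul_ne_zero hq0 (pow_ne_zero j hq0)
    have := (tendsto_one_add_mul_div_one_add_mul_atTop (β * (q * q ^ j) ^ 2) hp).comp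
      (tendsto_pow_atTop two_ne_zero)
    rwa [show β * (q * q ^ j) ^ 2 / (q * q ^ j) = β * q * q ^ j by field_simp] at this
  have hprod : ∏ j ∈ range n, β * q * q ^ j = (β * q) ^ n * q ^ n.choose 2 := by
    rw [prod_mul_distrib, prod_const, card_range, prod_pow_eq_pow_sum, sum_range_id,
      Nat.choose_two_right]
  have := ((Complex.continuous_ofReal.tendsto _).comp (tendsto_finsetProd _ hfac)).div_const
    (qPoch q q n)
  rw [hprod] at this
  push_cast at this
  simp only [phi21Coeff_eq hβ0]
  exact this

end Coefficients

lemma tendstoUniformlyOn_tsum_mul_one_div_pow {α : Type*} {l : Filter α} [l.NeBot]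
    {A : α → ℕ → ℂ} {c : ℕ → ℂ} {q : ℂ} (hq : ‖q‖ < 1)
    (hA : ∀ᶠ x in l, ∀ n, ‖A x n‖ ≤ ‖qPoch q q n‖⁻¹) (hAc : ∀ n, Tendsto (A · n) l (𝓝 (c n)))
    {K : Set ℂ} (hK : IsCompact K) (hK1 : K ⊆ {z | 1 < ‖z‖}) :
    TendstoUniformlyOn (fun x z => ∑' n, A x n * (1 / z) ^ n) (fun z => ∑' n, c n * (1 / z) ^ n)
      l K := by
  obtain ⟨r, hr0, hr1, hKr⟩ := hK.exists_subset_preimage_one_div_closedBall hK1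
  have hb : Summable fun n => ‖qPoch q q n‖⁻¹ * r ^ n := by
    simpa only [div_eq_inv_mul] using summable_pow_div_norm_qPoch hq hr0 hr1
  exact ((tendstoUniformlyOn_tsum_mul_pow hr0 hb hA hAc).comp fun z => 1 / z).mono hKr

section Limits

variable {q β : ℝ}

theorem tendstoUniformlyOn_phi21_mul (hq0 : 0 < q) (hq1 : q < 1) (hβ0 : 0 ≤ β)
    (hβq : β * q ≤ 1) {K : Set ℂ} (hK : IsCompact K) (hK1 : K ⊆ {z : ℂ | 1 < ‖z‖}) :
    TendstoUniformlyOn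
      (fun (x : ℝ) (z : ℂ) => phi21 (Complex.I * q * (Real.sqrt β : ℂ) * x)
        (-(Complex.I * q * (Real.sqrt β : ℂ) * x)) (-((x : ℂ) ^ 2 * q)) q (1 / z))
      (fun z : ℂ => 1 / qPochInf (1 / z) q) (𝓝[>] 0) K := by
  have hq : ‖(q : ℂ)‖ < 1 := by rwa [Complex.norm_of_nonneg hq0.le]
  refine (tendstoUniformlyOn_tsum_mul_one_div_pow hq
    (.of_forall fun x => norm_phi21Coeff_le hq0.le hq1.le hβ0 hβq x)
    (fun n => (tendsto_phi21Coeff_nhds_zero hβ0 n).mono_left nhdsWithin_le_nhds)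
    hK hK1).congr_right fun z hz => ?_
  rw [one_div (qPochInf _ _), ← (hasSum_pow_div_qPoch hq (norm_one_div_lt_one (hK1 hz))).tsum_eq]
  simp only [inv_mul_eq_div]

theorem tendstoUniformlyOn_phi21_div (hq0 : 0 < q) (hq1 : q < 1) (hβ0 : 0 ≤ β)
    (hβq : β * q ≤ 1) {K : Set ℂ} (hK : IsCompact K) (hK1 : K ⊆ {z : ℂ | 1 < ‖z‖}) :
    TendstoUniformlyOn
      (fun (x : ℝ) (z : ℂ) => phi21 (Complex.I * q * (Real.sqrt β : ℂ) / x)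
        (-(Complex.I * q * (Real.sqrt β : ℂ) / x)) (-(q / (x : ℂ) ^ 2)) q (1 / z))
      (fun z : ℂ => qPochInf (-(β * q / z)) q) (𝓝[>] 0) K := by
  have hq : ‖(q : ℂ)‖ < 1 := by rwa [Complex.norm_of_nonneg hq0.le]
  have hinv : ∀ (x : ℝ) n, phi21Coeff (Complex.I * q * (Real.sqrt β : ℂ) / x)
      (-(Complex.I * q * (Real.sqrt β : ℂ) / x)) (-(q / (x : ℂ) ^ 2)) q n =
      phi21Coeff (Complex.I * q * (Real.sqrt β : ℂ) * (x⁻¹ : ℝ))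
        (-(Complex.I * q * (Real.sqrt β : ℂ) * (x⁻¹ : ℝ))) (-(((x⁻¹ : ℝ) : ℂ) ^ 2 * q)) q n := by
    intro x n
    push_cast
    ring_nf
  have hlim : ∀ n, Tendsto (fun x : ℝ => phi21Coeff (Complex.I * q * (Real.sqrt β : ℂ) / x)
      (-(Complex.I * q * (Real.sqrt β : ℂ) / x)) (-(q / (x : ℂ) ^ 2)) q n) (𝓝[>] 0)
      (𝓝 ((β * q) ^ n * q ^ n.choose 2 / qPoch q q n)) := fun n => by
    simp only [hinv]
    exact (tendsto_phi21Coeff_atTop hq0.ne' hβ0 n).comp tendsto_inv_nhdsGT_zero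
  refine (tendstoUniformlyOn_tsum_mul_one_div_pow hq
    (.of_forall fun x n =>
      (congrArg norm (hinv x n)).trans_le (norm_phi21Coeff_le hq0.le hq1.le hβ0 hβq x⁻¹ n))
    hlim hK hK1).congr_right fun z hz => ?_
  have hz1 : 1 < ‖z‖ := hK1 hz
  have hw : ‖(β : ℂ) * q / z‖ < 1 := by
    rw [norm_div, norm_mul, Complex.norm_of_nonneg hβ0, Complex.norm_of_nonneg hq0.le]
    exact (div_lt_one (by linarith)).mpr (by linarith)
  rw [← (hasSum_qPochInf_neg hq hw).tsum_eq]
  exact tsum_congr fun n => by ring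

end Limits

/-- As `x ↓ 0`, `₂φ₁(iq√β x, −iq√β x; −x²q; q, 1/z) → 1/(1/z;q)_∞` and
`₂φ₁(iq√β/x, −iq√β/x; −q/x²; q, 1/z) → (−βq/z;q)_∞`, uniformly for `z` in
compact subsets of `|z| > 1`. -/
theorem phi21_limits_x_to_zero (q β : ℝ) (hq0 : 0 < q) (hq1 : q < 1)
    (hβ0 : 0 ≤ β) (hβ : β ≤ 1 / q) :
    (∀ z : ℂ, 1 < ‖z‖ →
      Filter.Tendsto
        (fun x : ℝ => phi21 (Complex.I * (q : ℂ) * (Real.sqrt β : ℂ) * (x : ℂ))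
          (-(Complex.I * (q : ℂ) * (Real.sqrt β : ℂ) * (x : ℂ)))
          (-((x : ℂ) ^ 2 * (q : ℂ))) (q : ℂ) (1 / z))
        (𝓝[>] (0 : ℝ)) (𝓝 (1 / qPochInf (1 / z) (q : ℂ)))) ∧
    (∀ K : Set ℂ, IsCompact K → K ⊆ {z : ℂ | 1 < ‖z‖} →
      TendstoUniformlyOn
        (fun (x : ℝ) (z : ℂ) => phi21 (Complex.I * (q : ℂ) * (Real.sqrt β : ℂ) * (x : ℂ))
          (-(Complex.I * (q : ℂ) * (Real.sqrt β : ℂ) * (x : ℂ)))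
          (-((x : ℂ) ^ 2 * (q : ℂ))) (q : ℂ) (1 / z))
        (fun z : ℂ => 1 / qPochInf (1 / z) (q : ℂ)) (𝓝[>] (0 : ℝ)) K) ∧
    (∀ z : ℂ, 1 < ‖z‖ →
      Filter.Tendsto
        (fun x : ℝ => phi21 (Complex.I * (q : ℂ) * (Real.sqrt β : ℂ) / (x : ℂ))
          (-(Complex.I * (q : ℂ) * (Real.sqrt β : ℂ) / (x : ℂ)))
          (-((q : ℂ) / (x : ℂ) ^ 2)) (q : ℂ) (1 / z))
        (𝓝[>] (0 : ℝ)) (𝓝 (qPochInf (-((β : ℂ) * (q : ℂ) / z)) (q : ℂ)))) ∧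
    (∀ K : Set ℂ, IsCompact K → K ⊆ {z : ℂ | 1 < ‖z‖} →
      TendstoUniformlyOn
        (fun (x : ℝ) (z : ℂ) => phi21 (Complex.I * (q : ℂ) * (Real.sqrt β : ℂ) / (x : ℂ))
          (-(Complex.I * (q : ℂ) * (Real.sqrt β : ℂ) / (x : ℂ)))
          (-((q : ℂ) / (x : ℂ) ^ 2)) (q : ℂ) (1 / z))
        (fun z : ℂ => qPochInf (-((β : ℂ) * (q : ℂ) / z)) (q : ℂ)) (𝓝[>] (0 : ℝ)) K) := by
  have hβq : β * q ≤ 1 := (le_div_iff₀ hq0).mp hβ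
  refine ⟨fun z hz => ?_, fun K hK hK1 => tendstoUniformlyOn_phi21_mul hq0 hq1 hβ0 hβq hK hK1,
    fun z hz => ?_, fun K hK hK1 => tendstoUniformlyOn_phi21_div hq0 hq1 hβ0 hβq hK hK1⟩
  · exact tendstoUniformlyOn_singleton_iff_tendsto.mp <| tendstoUniformlyOn_phi21_mul hq0 hq1 hβ0
      hβq isCompact_singleton (Set.singleton_subset_iff.mpr hz)
  · exact tendstoUniformlyOn_singleton_iff_tendsto.mp <| tendstoUniformlyOn_phi21_div hq0 hq1 hβ0
      hβq isCompact_singleton (Set.singleton_subset_iff.mpr hz)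

end
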